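/- Let 𝔉 be a subgroup-closed formation consisting of solvable groups. If A is a solvable K𝔉-subnormal subgroup of a finite group G, then A is contained in the solvable radical of G (the largest normal solvable subgroup of G). -/

import Mathlib

universe u

/-- A class of groups is subgroup-closed if it is closed under taking subgroups. -/
def IsSubgroupClosed (F : ∀ (G : Type u) [Group G], Prop) : Prop :=
  ∀ (G : Type u) [Group G] (H : Subgroup G), F G → F H

/-- A formation: a class of groups closed under isomorphisms, quotients and
subdirect products. -/
structure IsFormation (F : ∀ (G : Type u) [Group G], Prop) : Prop where
  iso : ∀ (G H : Type u) [Group G] [Group H], G ≃* H → F G → F H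
  quot : ∀ (G : Type u) [Group G] (N : Subgroup G) (_ : N.Normal), F G → F (G ⧸ N)
  subdirect : ∀ (G : Type u) [Group G] (N₁ N₂ : Subgroup G) (_ : N₁.Normal) (_ : N₂.Normal),
    F (G ⧸ N₁) → F (G ⧸ N₂) → N₁ ⊓ N₂ = ⊥ → F G

/-- The 𝔉-fResidual of `G`: the smallest normal subgroup with quotient in `F`. -/
def fResidual (F : ∀ (G : Type u) [Group G], Prop) (G : Type u) [Group G] : Subgroup G :=
  sInf {N : Subgroup G | ∃ _ : N.Normal, F (G ⧸ N)}

/-- `KSubnormal F H K` : there is a chain `H = H₀ ≤ … ≤ Hₙ = K` of subgroups of `G`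
such that each `Hᵢ` is normal in `Hᵢ₊₁` or contains the `F`-fResidual of `Hᵢ₊₁`. -/
inductive KSubnormal (F : ∀ (G : Type u) [Group G], Prop) {G : Type u} [Group G] :
    Subgroup G → Subgroup G → Prop
  | refl (H : Subgroup G) : KSubnormal F H H
  | step {H K L : Subgroup G} : KSubnormal F H K → K ≤ L →
      ((K.subgroupOf L).Normal ∨ fResidual F ↥L ≤ K.subgroupOf L) → KSubnormal F H L

/-- `M` is a modular element of the subgroup lattice of `G`. -/
def IsModularSubgroup {G : Type u} [Group G] (M : Subgroup G) : Prop :=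
  (∀ X Y : Subgroup G, X ≤ Y → (X ⊔ M) ⊓ Y = X ⊔ (M ⊓ Y)) ∧
  (∀ X Y : Subgroup G, M ≤ Y → (M ⊔ X) ⊓ Y = M ⊔ (X ⊓ Y))

/-- `Submodular H K` : a chain from `H` to `K` with each term modular in the next. -/
inductive Submodular {G : Type u} [Group G] : Subgroup G → Subgroup G → Prop
  | refl (H : Subgroup G) : Submodular H H
  | step {H K L : Subgroup G} : Submodular H K → K ≤ L →
      IsModularSubgroup (K.subgroupOf L) → Submodular H L

/-- `SubnormalIn H K` : a chain from `H` to `K` with each term normal in the next. -/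
inductive SubnormalIn {G : Type u} [Group G] : Subgroup G → Subgroup G → Prop
  | refl (H : Subgroup G) : SubnormalIn H H
  | step {H K L : Subgroup G} : SubnormalIn H K → K ≤ L →
      (K.subgroupOf L).Normal → SubnormalIn H L

/-- A group is supersolvable if it has a normal series with cyclic factors:
each term is normal in `G` and each successive term is generated by the previous
one together with a single element. -/
def IsSupersolvable (G : Type u) [Group G] : Prop :=
  ∃ (n : ℕ) (s : Fin (n + 1) → Subgroup G), s 0 = ⊥ ∧ s (Fin.last n) = ⊤ ∧
    (∀ i, (s i).Normal) ∧
    ∀ i : Fin n, ∃ g : G, s i.succ = s i.castSucc ⊔ Subgroup.zpowers g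

/-- The class 𝔘₁ of supersolvable groups of square-free exponent. -/
def U1 : ∀ (G : Type u) [Group G], Prop := fun G _ =>
  IsSupersolvable G ∧ Squarefree (Monoid.exponent G)

/-- The solvable radical: the largest normal solvable subgroup. -/
def solvRad (G : Type u) [Group G] : Subgroup G :=
  sSup {N : Subgroup G | N.Normal ∧ IsSolvable ↥N}

/-- The Fitting subgroup: the largest normal nilpotent subgroup. -/
def fitting (G : Type u) [Group G] : Subgroup G :=
  sSup {N : Subgroup G | N.Normal ∧ Group.IsNilpotent ↥N}

open Subgroup Function

section Aux

variable {G : Type u} [Group G]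

lemma mem_map_subtype {K : Subgroup G} {S : Subgroup ↥K} {x : G} :
    x ∈ S.map K.subtype ↔ ∃ hx : x ∈ K, (⟨x, hx⟩ : ↥K) ∈ S := by
  constructor
  · rintro ⟨⟨y, hy⟩, hyS, rfl⟩; exact ⟨hy, hyS⟩
  · rintro ⟨hx, hS⟩; exact ⟨⟨x, hx⟩, hS, rfl⟩

lemma sSup_mem_of_closed [Finite G] (S : Set (Subgroup G)) (hbot : ⊥ ∈ S)
    (hsup : ∀ a ∈ S, ∀ b ∈ S, a ⊔ b ∈ S) : sSup S ∈ S := by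
  obtain ⟨M, hM, hmax⟩ := Set.Finite.exists_maximalFor id S (Set.toFinite S) ⟨⊥, hbot⟩
  have hub : ∀ b ∈ S, b ≤ M := by
    intro b hb
    have h := hmax (hsup M hM b hb) le_sup_left
    exact le_sup_right.trans h
  have : sSup S = M := le_antisymm (sSup_le hub) (le_sSup hM)
  rw [this]; exact hM

lemma sInf_mem_of_closed [Finite G] (S : Set (Subgroup G)) (hne : S.Nonempty)
    (hinf : ∀ a ∈ S, ∀ b ∈ S, a ⊓ b ∈ S) : sInf S ∈ S := by
  obtain ⟨M, hM, hmin⟩ := Set.Finite.exists_minimalFor id S (Set.toFinite S) hne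
  have hlb : ∀ b ∈ S, M ≤ b := by
    intro b hb
    have h := hmin (hinf M hM b hb) inf_le_left
    exact h.trans inf_le_right
  have : sInf S = M := le_antisymm (sInf_le hM) (le_sInf hlb)
  rw [this]; exact hM

lemma isSolvable_of_mulEquiv {H : Type*} [Group H] (e : G ≃* H) (h : IsSolvable G) :
    IsSolvable H := by
  haveI : Group.IsSolvable G := h
  exact solvable_of_surjective (f := e.toMonoidHom) e.surjective

lemma isSolvable_of_le {a b : Subgroup G} (h : a ≤ b) (hb : IsSolvable ↥b) : IsSolvable ↥a := by
  haveI : Group.IsSolvable b := hb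
  exact solvable_of_solvable_injective (inclusion_injective h)

lemma isSolvable_map_subtype {K : Subgroup G} {S : Subgroup ↥K} (hS : IsSolvable ↥S) :
    IsSolvable ↥(S.map K.subtype) :=
  isSolvable_of_mulEquiv (S.equivMapOfInjective K.subtype K.subtype_injective) hS

lemma isSolvable_subgroupOf {a b : Subgroup G} (h : a ≤ b) (ha : IsSolvable ↥a) :
    IsSolvable ↥(a.subgroupOf b) := by
  haveI : Group.IsSolvable a := ha
  exact solvable_of_solvable_injective (f := (subgroupOfEquivOfLe h).toMonoidHom)
    (subgroupOfEquivOfLe h).injective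

lemma isSolvable_bot : IsSolvable ↥(⊥ : Subgroup G) :=
  isSolvable_of_comm fun a b => Subsingleton.elim _ _

lemma normal_sup {a b : Subgroup G} (ha : a.Normal) (hb : b.Normal) : (a ⊔ b).Normal := by
  have key : ∀ g : G, ∀ (N : Subgroup G), N.Normal →
      Subgroup.map (MulAut.conj g).toMonoidHom N = N := by
    intro g N hN
    apply le_antisymm
    · rintro _ ⟨x, hx, rfl⟩
      exact hN.conj_mem x hx g
    · intro x hx
      refine ⟨g⁻¹ * x * g, ?_, by simp [MulAut.conj]; group⟩
      have := hN.conj_mem x hx g⁻¹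
      simpa using this
  constructor
  intro n hn g
  have : Subgroup.map (MulAut.conj g).toMonoidHom (a ⊔ b) = a ⊔ b := by
    rw [Subgroup.map_sup, key g a ha, key g b hb]
  rw [← this]
  exact ⟨n, hn, by simp [MulAut.conj]⟩

lemma isSolvable_sup {a b : Subgroup G} (hb : b.Normal) (hsa : IsSolvable ↥a)
    (hsb : IsSolvable ↥b) : IsSolvable ↥(a ⊔ b) := by
  haveI := hb
  haveI : Group.IsSolvable a := hsa
  haveI : Group.IsSolvable b := hsb
  haveI : (b.subgroupOf (a ⊔ b)).Normal := hb.subgroupOf _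
  haveI : Group.IsSolvable (↥a ⧸ b.subgroupOf a) :=
    solvable_of_surjective (QuotientGroup.mk'_surjective (b.subgroupOf a))
  haveI : Group.IsSolvable (↥(a ⊔ b) ⧸ b.subgroupOf (a ⊔ b)) :=
    isSolvable_of_mulEquiv (QuotientGroup.quotientInfEquivProdNormalQuotient a b) ‹Group.IsSolvable (↥a ⧸ b.subgroupOf a)›
  exact solvable_of_ker_le_range (inclusion (le_sup_right : b ≤ a ⊔ b))
    (QuotientGroup.mk' (b.subgroupOf (a ⊔ b)))
    (by rw [QuotientGroup.ker_mk', Subgroup.inclusion_range])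

end Aux

section SolvRad

variable {G : Type u} [Group G]

lemma solvRad_mem [Finite G] : (solvRad G).Normal ∧ IsSolvable ↥(solvRad G) :=
  sSup_mem_of_closed {N : Subgroup G | N.Normal ∧ IsSolvable ↥N}
    ⟨inferInstance, isSolvable_bot⟩
    (fun a ha b hb => ⟨normal_sup ha.1 hb.1, isSolvable_sup hb.1 ha.2 hb.2⟩)

lemma solvRad_normal (G : Type u) [Group G] [Finite G] : (solvRad G).Normal := solvRad_mem.1

lemma solvRad_solvable (G : Type u) [Group G] [Finite G] : IsSolvable ↥(solvRad G) :=
  solvRad_mem.2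

lemma le_solvRad {N : Subgroup G} (hn : N.Normal) (hs : IsSolvable ↥N) : N ≤ solvRad G :=
  le_sSup ⟨hn, hs⟩

lemma solvRad_eq_top (h : IsSolvable G) : solvRad G = ⊤ :=
  top_le_iff.mp (le_sSup ⟨inferInstance,
    isSolvable_of_mulEquiv Subgroup.topEquiv.symm h⟩)

/-- The solvable radical of a subgroup, as a subgroup of the ambient group. -/
def SRR (K : Subgroup G) : Subgroup G := (solvRad ↥K).map K.subtype

lemma SRR_le (K : Subgroup G) : SRR K ≤ K := Subgroup.map_subtype_le _

lemma SRR_solvable [Finite G] (K : Subgroup G) : IsSolvable ↥(SRR K) :=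
  isSolvable_map_subtype (solvRad_solvable ↥K)

lemma le_SRR [Finite G] {N K : Subgroup G} (hNK : N ≤ K)
    (hconj : ∀ k ∈ K, ∀ x ∈ N, k * x * k⁻¹ ∈ N) (hs : IsSolvable ↥N) : N ≤ SRR K := by
  have hnorm : (N.subgroupOf K).Normal := by
    constructor
    rintro ⟨x, hxK⟩ hx ⟨g, hgK⟩
    rw [Subgroup.mem_subgroupOf] at hx ⊢
    exact hconj g hgK x hx
  have hsolv : IsSolvable ↥(N.subgroupOf K) := isSolvable_subgroupOf hNK hs
  have hle : N.subgroupOf K ≤ solvRad ↥K := le_solvRad hnorm hsolv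
  intro x hx
  exact mem_map_subtype.mpr ⟨hNK hx, hle (Subgroup.mem_subgroupOf.mpr hx)⟩

lemma SRR_conj_self [Finite G] {K : Subgroup G} {k x : G} (hk : k ∈ K) (hx : x ∈ SRR K) :
    k * x * k⁻¹ ∈ SRR K := by
  obtain ⟨hxK, hxS⟩ := mem_map_subtype.mp hx
  have := (solvRad_normal ↥K).conj_mem ⟨x, hxK⟩ hxS ⟨k, hk⟩
  exact mem_map_subtype.mpr ⟨(K.mul_mem (K.mul_mem hk hxK) (K.inv_mem hk)), this⟩

lemma SRR_conj [Finite G] {K L : Subgroup G} (hKL : K ≤ L)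
    (hconjK : ∀ l ∈ L, ∀ x ∈ K, l * x * l⁻¹ ∈ K) :
    ∀ l ∈ L, ∀ x ∈ SRR K, l * x * l⁻¹ ∈ SRR K := by
  intro l hl x hx
  set c : G →* G := (MulAut.conj l).toMonoidHom with hc
  have hcinj : Injective c := (MulAut.conj l).injective
  have happ : ∀ y : G, c y = l * y * l⁻¹ := fun y => rfl
  set Nc := (SRR K).map c with hNc
  have hmem : ∀ {y : G}, y ∈ Nc ↔ ∃ z ∈ SRR K, l * z * l⁻¹ = y := by
    intro y
    constructor
    · rintro ⟨z, hz, rfl⟩; exact ⟨z, hz, rfl⟩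
    · rintro ⟨z, hz, rfl⟩; exact ⟨z, hz, rfl⟩
  have hNcle : Nc ≤ SRR K := by
    apply le_SRR
    · -- Nc ≤ K
      intro y hy
      obtain ⟨z, hz, rfl⟩ := hmem.mp hy
      exact hconjK l hl z (SRR_le K hz)
    · -- conj-invariance of Nc under K
      intro g hg y hy
      obtain ⟨z, hz, rfl⟩ := hmem.mp hy
      have hg' : l⁻¹ * g * l ∈ K := by
        have := hconjK l⁻¹ (L.inv_mem hl) g hg
        simpa using this
      have hz' : (l⁻¹ * g * l) * z * (l⁻¹ * g * l)⁻¹ ∈ SRR K := SRR_conj_self hg' hz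
      refine hmem.mpr ⟨(l⁻¹ * g * l) * z * (l⁻¹ * g * l)⁻¹, hz', ?_⟩
      group
    · -- solvable
      exact isSolvable_of_mulEquiv ((SRR K).equivMapOfInjective c hcinj) (SRR_solvable K)
  exact hNcle (hmem.mpr ⟨x, hx, rfl⟩)

lemma SRR_normal_of_subgroupOf_normal [Finite G] {K L : Subgroup G} (hKL : K ≤ L)
    (hn : (K.subgroupOf L).Normal) : SRR K ≤ SRR L := by
  have hconjK : ∀ l ∈ L, ∀ x ∈ K, l * x * l⁻¹ ∈ K := by
    intro l hl x hx
    exact ((Subgroup.normal_subgroupOf_iff hKL).mp hn) x l hx hl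
  exact le_SRR ((SRR_le K).trans hKL) (SRR_conj hKL hconjK) (SRR_solvable K)

lemma SRR_top_le_solvRad (G : Type u) [Group G] [Finite G] :
    SRR (⊤ : Subgroup G) ≤ solvRad G := by
  apply le_solvRad
  · constructor
    intro n hn g
    exact SRR_conj (le_refl ⊤) (fun _ _ _ _ => Subgroup.mem_top _) g (Subgroup.mem_top g) n hn
  · exact SRR_solvable ⊤

end SolvRad

section Residual

variable (F : ∀ (G : Type u) [Group G], Prop)

instance fResidual_normal (G : Type u) [Group G] : (fResidual F G).Normal := by
  constructor
  intro x hx g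
  rw [fResidual, Subgroup.mem_sInf] at hx ⊢
  intro N hN
  exact hN.choose.conj_mem x (hx N hN) g

variable {F}
variable (hF : IsFormation F)
include hF

lemma F_quot_mono {G : Type u} [Group G] {N M : Subgroup G} (hNM : N ≤ M) (hN : N.Normal)
    (hM : M.Normal) (h : F (G ⧸ N)) : F (G ⧸ M) := by
  haveI := hN; haveI := hM
  have hnormal : (M.map (QuotientGroup.mk' N)).Normal :=
    hM.map _ (QuotientGroup.mk'_surjective N)
  exact hF.iso _ _ (QuotientGroup.quotientQuotientEquivQuotient N M hNM)
    (hF.quot _ _ hnormal h)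

lemma F_inf {G : Type u} [Group G] {N₁ N₂ : Subgroup G} (h₁n : N₁.Normal) (h₂n : N₂.Normal)
    (h₁ : F (G ⧸ N₁)) (h₂ : F (G ⧸ N₂)) : F (G ⧸ (N₁ ⊓ N₂)) := by
  haveI := h₁n; haveI := h₂n
  haveI hPn : (N₁ ⊓ N₂).Normal := ⟨fun x hx g => ⟨h₁n.conj_mem x hx.1 g, h₂n.conj_mem x hx.2 g⟩⟩
  set π := QuotientGroup.mk' (N₁ ⊓ N₂) with hπ
  have hsurj : Surjective π := QuotientGroup.mk'_surjective (N₁ ⊓ N₂)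
  have hM₁ : (N₁.map π).Normal := h₁n.map π hsurj
  have hM₂ : (N₂.map π).Normal := h₂n.map π hsurj
  apply hF.subdirect _ (N₁.map π) (N₂.map π) hM₁ hM₂
  · exact hF.iso _ _ (QuotientGroup.quotientQuotientEquivQuotient _ N₁ inf_le_left).symm h₁
  · exact hF.iso _ _ (QuotientGroup.quotientQuotientEquivQuotient _ N₂ inf_le_right).symm h₂
  · rw [eq_bot_iff]
    rintro x ⟨hx1, hx2⟩
    obtain ⟨a, ha, rfl⟩ := hx1
    obtain ⟨b, hb, hab⟩ := hx2
    have hker : b⁻¹ * a ∈ N₁ ⊓ N₂ := by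
      rw [← QuotientGroup.ker_mk' (N₁ ⊓ N₂), MonoidHom.mem_ker, map_mul, map_inv, hab,
        inv_mul_cancel]
    have haN₂ : a ∈ N₂ := by
      have : b * (b⁻¹ * a) ∈ N₂ := N₂.mul_mem hb hker.2
      simpa using this
    have : π a = 1 := by
      rw [← MonoidHom.mem_ker, QuotientGroup.ker_mk']
      exact ⟨ha, haN₂⟩
    rw [this]; exact Subgroup.mem_bot.mpr rfl

lemma fResidual_spec {G : Type u} [Group G] [Finite G] (h : fResidual F G ≠ ⊤) :
    F (G ⧸ fResidual F G) := by
  set S := {N : Subgroup G | ∃ _ : N.Normal, F (G ⧸ N)} with hS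
  have hne : S.Nonempty := by
    by_contra hemp
    apply h
    have hdef : fResidual F G = sInf S := rfl
    rw [hdef, Set.not_nonempty_iff_eq_empty.mp hemp, sInf_empty]
  have hmem : sInf S ∈ S := by
    apply sInf_mem_of_closed S hne
    rintro a ⟨han, haf⟩ b ⟨hbn, hbf⟩
    exact ⟨⟨fun x hx g => ⟨han.conj_mem x hx.1 g, hbn.conj_mem x hx.2 g⟩⟩,
      F_inf hF han hbn haf hbf⟩
  obtain ⟨hn, hFq⟩ := hmem
  exact hFq

lemma fResidual_le_map {G H : Type u} [Group G] [Group H] [Finite G] (f : G →* H)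
    (hf : Surjective f) : fResidual F H ≤ (fResidual F G).map f := by
  by_cases htop : fResidual F G = ⊤
  · rw [htop]
    have : ((⊤ : Subgroup G)).map f = ⊤ := by
      rw [eq_top_iff]
      intro x _
      obtain ⟨y, rfl⟩ := hf x
      exact ⟨y, trivial, rfl⟩
    rw [this]; exact le_top
  · have hFq := fResidual_spec hF htop
    have hres_norm := fResidual_normal F G
    set M := (fResidual F G).map f with hM
    have hMnorm : M.Normal := hres_norm.map f hf
    haveI := hMnorm
    apply sInf_le
    refine ⟨hMnorm, ?_⟩
    set φ := (QuotientGroup.mk' M).comp f with hφ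
    have hφs : Surjective φ := (QuotientGroup.mk'_surjective M).comp hf
    have e := QuotientGroup.quotientKerEquivOfSurjective φ hφs
    apply hF.iso _ _ e
    apply F_quot_mono hF ?_ hres_norm (MonoidHom.normal_ker φ) hFq
    intro x hx
    rw [MonoidHom.mem_ker, hφ, MonoidHom.comp_apply, ← MonoidHom.mem_ker,
      QuotientGroup.ker_mk']
    exact ⟨x, hx, rfl⟩

lemma fResidual_map_equiv {G H : Type u} [Group G] [Group H] [Finite G] [Finite H]
    (e : G ≃* H) : fResidual F H = (fResidual F G).map e.toMonoidHom := by
  apply le_antisymm (fResidual_le_map hF _ e.surjective)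
  have h2 := fResidual_le_map hF e.symm.toMonoidHom e.symm.surjective
  calc (fResidual F G).map e.toMonoidHom
      ≤ ((fResidual F H).map e.symm.toMonoidHom).map e.toMonoidHom :=
        Subgroup.map_mono h2
    _ = fResidual F H := by
        rw [Subgroup.map_map]
        have : e.toMonoidHom.comp e.symm.toMonoidHom = MonoidHom.id H := by
          ext x; simp
        rw [this, Subgroup.map_id]

end Residual

section Chains

variable {F : ∀ (G : Type u) [Group G], Prop}

lemma KSubnormal.le' {G : Type u} [Group G] {A K : Subgroup G} (h : KSubnormal F A K) :
    A ≤ K := by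
  induction h with
  | refl => exact le_rfl
  | step _ hKL _ ih => exact ih.trans hKL

variable (hF : IsFormation F)
include hF

lemma KSubnormal.subgroupOf' {G : Type u} [Group G] [Finite G] {A K L : Subgroup G}
    (h : KSubnormal F A K) (hKL : K ≤ L) :
    KSubnormal F (A.subgroupOf L) (K.subgroupOf L) := by
  induction h with
  | refl => exact .refl _
  | @step P Q hAP hPQ cond ih =>
    have hQL : Q ≤ L := hKL
    have hPL : P ≤ L := hPQ.trans hQL
    refine .step (ih hPL) (fun x hx => Subgroup.mem_subgroupOf.mpr
      (hPQ (Subgroup.mem_subgroupOf.mp hx))) ?_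
    have hle : P.subgroupOf L ≤ Q.subgroupOf L :=
      fun x hx => Subgroup.mem_subgroupOf.mpr (hPQ (Subgroup.mem_subgroupOf.mp hx))
    rcases cond with hnorm | hres
    · left
      rw [Subgroup.normal_subgroupOf_iff hle]
      intro x y hx hy
      rw [Subgroup.mem_subgroupOf] at hx ⊢
      have := (Subgroup.normal_subgroupOf_iff hPQ).mp hnorm ((x : ↥L) : G) ((y : ↥L) : G)
        (Subgroup.mem_subgroupOf.mp hx) (Subgroup.mem_subgroupOf.mp hy)
      simpa using this
    · right
      set e : ↥(Q.subgroupOf L) ≃* ↥Q := Subgroup.subgroupOfEquivOfLe hQL with he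
      have hcoe : ∀ y : ↥Q, (((e.symm y : ↥(Q.subgroupOf L)) : ↥L) : G) = (y : G) := by
        intro y; rfl
      have h1 : fResidual F ↥(Q.subgroupOf L) =
          (fResidual F ↥Q).map e.symm.toMonoidHom := fResidual_map_equiv hF e.symm
      rw [h1]
      rintro _ ⟨y, hy, rfl⟩
      have hyP : (y : G) ∈ P := Subgroup.mem_subgroupOf.mp (hres hy)
      exact hyP

lemma KSubnormal.map' {G H : Type u} [Group G] [Group H] [Finite G] {A K : Subgroup G}
    (f : G →* H) (hf : Surjective f) (h : KSubnormal F A K) :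
    KSubnormal F (A.map f) (K.map f) := by
  induction h with
  | refl => exact .refl _
  | @step P Q hAP hPQ cond ih =>
    refine .step ih (Subgroup.map_mono hPQ) ?_
    rcases cond with hnorm | hres
    · left
      rw [Subgroup.normal_subgroupOf_iff (Subgroup.map_mono hPQ)]
      rintro _ _ ⟨x, hx, rfl⟩ ⟨y, hy, rfl⟩
      have := (Subgroup.normal_subgroupOf_iff hPQ).mp hnorm x y hx hy
      exact ⟨y * x * y⁻¹, this, by simp⟩
    · right
      set φ := f.subgroupMap Q with hφ
      have hφs : Surjective φ := f.subgroupMap_surjective Q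
      have h1 : fResidual F ↥(Q.map f) ≤ (fResidual F ↥Q).map φ :=
        fResidual_le_map hF φ hφs
      refine h1.trans ?_
      rintro _ ⟨x, hx, rfl⟩
      have hxP : (x : G) ∈ P := Subgroup.mem_subgroupOf.mp (hres hx)
      rw [Subgroup.mem_subgroupOf]
      exact ⟨(x : G), hxP, rfl⟩

end Chains

section Cards

variable {G : Type u} [Group G]

lemma card_lt_of_lt [Finite G] {K L : Subgroup G} (h : K < L) :
    Nat.card ↥K < Nat.card ↥L := by
  have hss : (K : Set G) ⊂ (L : Set G) := SetLike.coe_ssubset_coe.mpr h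
  have := Set.ncard_lt_ncard hss (Set.toFinite _)
  rwa [← Nat.card_coe_set_eq, ← Nat.card_coe_set_eq] at this

lemma card_quotient_lt [Finite G] {N : Subgroup G} (hN : N.Normal) (h : N ≠ ⊥) :
    Nat.card (G ⧸ N) < Nat.card G := by
  haveI := hN
  have hcard := Subgroup.card_eq_card_quotient_mul_card_subgroup N
  have h2 : 1 < Nat.card ↥N := (Subgroup.one_lt_card_iff_ne_bot N).mpr h
  have hpos : 0 < Nat.card (G ⧸ N) := Nat.card_pos
  calc Nat.card (G ⧸ N) < Nat.card (G ⧸ N) * Nat.card ↥N := by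
        exact lt_mul_of_one_lt_right hpos h2
    _ = Nat.card G := hcard.symm

lemma card_subgroupOf {K L : Subgroup G} (h : K ≤ L) :
    Nat.card ↥(K.subgroupOf L) = Nat.card ↥K :=
  Nat.card_congr (Subgroup.subgroupOfEquivOfLe h).toEquiv

lemma card_top_subgroup (G : Type u) [Group G] : Nat.card ↥(⊤ : Subgroup G) = Nat.card G :=
  Nat.card_congr Subgroup.topEquiv.toEquiv

end Cards

section Main

variable {F : ∀ (G : Type u) [Group G], Prop}

theorem main_thm (hF : IsFormation F)
    (hsolv : ∀ (G : Type u) [Group G], F G → IsSolvable G) :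
    ∀ n : ℕ, ∀ (X : Type u) [Group X] [Finite X] (A K : Subgroup X),
      KSubnormal F A K → Nat.card ↥K ≤ n → IsSolvable ↥A → A ≤ SRR K := by
  intro n
  induction n using Nat.strong_induction_on with
  | _ n IH =>
  intro X _ _ A K h
  induction h with
  | refl =>
    intro _ hsB x hx
    refine mem_map_subtype.mpr ⟨hx, ?_⟩
    rw [solvRad_eq_top hsB]
    trivial
  | @step P Q hAP hPQ cond ih =>
    intro hcard hsA
    rcases hPQ.lt_or_eq with hlt | rfl
    case inr => exact ih hcard hsA
    have hcP : Nat.card ↥P ≤ n := ((card_lt_of_lt hlt).trans_le hcard).le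
    rcases cond with hnorm | hres
    · exact (ih hcP hsA).trans (SRR_normal_of_subgroupOf_normal hPQ hnorm)
    -- BIG case
    have hAL : A ≤ Q := hAP.le'.trans hPQ
    set a := A.subgroupOf Q with ha
    set k := P.subgroupOf Q with hk
    have hsa : IsSolvable ↥a := isSolvable_subgroupOf hAL hsA
    have hchain : KSubnormal F a k := hAP.subgroupOf' hF hPQ
    have hkcard : Nat.card ↥k = Nat.card ↥P := card_subgroupOf hPQ
    have hkltn : Nat.card ↥k < n := by
      rw [hkcard]; exact lt_of_lt_of_le (card_lt_of_lt hlt) hcard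
    have hrho : a ≤ SRR k := IH _ hkltn ↥Q a k hchain le_rfl hsa
    suffices hfin : a ≤ solvRad ↥Q by
      intro x hx
      have hxQ : x ∈ Q := hAL hx
      exact mem_map_subtype.mpr ⟨hxQ, hfin (Subgroup.mem_subgroupOf.mpr hx)⟩
    by_cases hsQ : IsSolvable ↥Q
    · rw [solvRad_eq_top hsQ]; exact le_top
    have hknetop : k ≠ ⊤ := by
      intro e
      apply hlt.not_ge
      intro x hxQ
      have hmem : (⟨x, hxQ⟩ : ↥Q) ∈ k := e ▸ Subgroup.mem_top _
      exact Subgroup.mem_subgroupOf.mp hmem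
    have hresne : fResidual F ↥Q ≠ ⊤ := fun e => hknetop (top_le_iff.mp (e ▸ hres))
    have hFq : F (↥Q ⧸ fResidual F ↥Q) := fResidual_spec hF hresne
    have hsq : IsSolvable (↥Q ⧸ fResidual F ↥Q) := hsolv _ hFq
    haveI hnontriv : Nontrivial ↥Q := by
      rcases subsingleton_or_nontrivial ↥Q with hs | hn
      · exact absurd (isSolvable_of_comm fun a b => Subsingleton.elim _ _) hsQ
      · exact hn
    obtain ⟨N, ⟨hNnorm, hNne⟩, hNminw⟩ :=
      Set.Finite.exists_minimalFor id {N : Subgroup ↥Q | N.Normal ∧ N ≠ ⊥}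
        (Set.toFinite _) ⟨⊤, inferInstance, fun htop => by
          obtain ⟨x, hx⟩ := exists_ne (1 : ↥Q)
          have hmem : x ∈ (⊥ : Subgroup ↥Q) := htop ▸ Subgroup.mem_top x
          exact hx (Subgroup.mem_bot.mp hmem)⟩
    have hNmin : ∀ N' : Subgroup ↥Q, N'.Normal → N' ≠ ⊥ → N' ≤ N → N' = N :=
      fun N' h1 h2 hle => le_antisymm hle (hNminw ⟨h1, h2⟩ hle)
    haveI := hNnorm
    set π := QuotientGroup.mk' N with hπ
    have hπs : Surjective π := QuotientGroup.mk'_surjective N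
    have hchainQ : KSubnormal F (a.map π) (k.map π) := hchain.map' hF π hπs
    have hresQ : fResidual F (↥Q ⧸ N) ≤ k.map π :=
      (fResidual_le_map hF π hπs).trans (Subgroup.map_mono hres)
    have hstep : fResidual F ↥(⊤ : Subgroup (↥Q ⧸ N)) ≤ (k.map π).subgroupOf ⊤ := by
      rw [fResidual_map_equiv hF
        (Subgroup.topEquiv.symm : (↥Q ⧸ N) ≃* ↥(⊤ : Subgroup (↥Q ⧸ N)))]
      rintro _ ⟨y, hy, rfl⟩
      rw [Subgroup.mem_subgroupOf]
      exact hresQ hy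
    have hchainTop : KSubnormal F (a.map π) ⊤ := .step hchainQ le_top (Or.inr hstep)
    have hQcard : Nat.card ↥(⊤ : Subgroup (↥Q ⧸ N)) < n := by
      rw [card_top_subgroup]
      calc Nat.card (↥Q ⧸ N) < Nat.card ↥Q := card_quotient_lt hNnorm hNne
        _ ≤ n := hcard
    have hsaQ : IsSolvable ↥(a.map π) := by
      haveI : Group.IsSolvable a := hsa
      exact solvable_of_surjective (π.subgroupMap_surjective a)
    have h4 : a.map π ≤ SRR (⊤ : Subgroup (↥Q ⧸ N)) :=
      IH _ hQcard (↥Q ⧸ N) (a.map π) ⊤ hchainTop le_rfl hsaQ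
    have h4' : a.map π ≤ solvRad (↥Q ⧸ N) := h4.trans (SRR_top_le_solvRad _)
    set R := (solvRad (↥Q ⧸ N)).comap π with hR
    have hRnorm : R.Normal := (solvRad_normal _).comap π
    have haR : a ≤ R := fun x hx => Subgroup.mem_comap.mpr (h4' ⟨x, hx, rfl⟩)
    by_cases hNs : IsSolvable ↥N
    · have hNR : N ≤ R := by
        intro x hx
        apply Subgroup.mem_comap.mpr
        have hx1 : π x = 1 := (QuotientGroup.eq_one_iff x).mpr hx
        rw [hx1]
        exact one_mem _
      have hRs : IsSolvable ↥R := by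
        haveI : Group.IsSolvable N := hNs
        haveI : Group.IsSolvable (solvRad (↥Q ⧸ N)) := solvRad_solvable (↥Q ⧸ N)
        apply solvable_of_ker_le_range (Subgroup.inclusion hNR)
          ((π.comp R.subtype).codRestrict (solvRad (↥Q ⧸ N))
            (fun x => Subgroup.mem_comap.mp x.2))
        intro x hx
        rw [MonoidHom.mem_ker] at hx
        have h1 : π (x : ↥Q) = 1 := congrArg Subtype.val hx
        have hxN : (x : ↥Q) ∈ N := (QuotientGroup.eq_one_iff _).mp h1
        exact ⟨⟨(x : ↥Q), hxN⟩, Subtype.ext rfl⟩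
      exact haR.trans (le_solvRad hRnorm hRs)
    · have hNk : N ≤ k := by
        have hcap : (N ⊓ fResidual F ↥Q).Normal :=
          ⟨fun x hx g => ⟨hNnorm.conj_mem x hx.1 g, (fResidual_normal F ↥Q).conj_mem x hx.2 g⟩⟩
        rcases eq_or_ne (N ⊓ fResidual F ↥Q) ⊥ with hb | hnb
        · exfalso
          apply hNs
          haveI : Group.IsSolvable (↥Q ⧸ fResidual F ↥Q) := hsq
          apply solvable_of_solvable_injective
            (f := (QuotientGroup.mk' (fResidual F ↥Q)).comp N.subtype)
          intro x y hxy
          simp only [MonoidHom.comp_apply, QuotientGroup.mk'_apply] at hxy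
          have h1 : ((x : ↥Q))⁻¹ * (y : ↥Q) ∈ fResidual F ↥Q := (QuotientGroup.eq).mp hxy
          have h2 : ((x : ↥Q))⁻¹ * (y : ↥Q) ∈ N := N.mul_mem (N.inv_mem x.2) y.2
          have h3 : ((x : ↥Q))⁻¹ * (y : ↥Q) = 1 := by
            have hmem : ((x : ↥Q))⁻¹ * (y : ↥Q) ∈ N ⊓ fResidual F ↥Q := ⟨h2, h1⟩
            rw [hb, Subgroup.mem_bot] at hmem
            exact hmem
          apply Subtype.ext
          exact (inv_mul_eq_one.mp h3)
        · have heq := hNmin _ hcap hnb inf_le_left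
          have hle : N ≤ fResidual F ↥Q := by rw [← heq]; exact inf_le_right
          exact hle.trans hres
      have hT : SRR N = ⊥ := by
        rcases eq_or_ne (SRR N) ⊥ with hb | hb
        · exact hb
        · exfalso
          have hTnorm : (SRR N).Normal := by
            constructor
            intro x hx g
            exact SRR_conj (le_top : N ≤ ⊤) (fun l _ z hz => hNnorm.conj_mem z hz l)
              g trivial x hx
          have heq := hNmin _ hTnorm hb (SRR_le N)
          apply hNs
          rw [← heq]
          exact SRR_solvable N
      set ρ := SRR k with hρdef
      have hρconj : ∀ u ∈ k, ∀ x ∈ ρ, u * x * u⁻¹ ∈ ρ := fun u hu x hx => SRR_conj_self hu hx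
      have hρN : ρ ⊓ N = ⊥ := by
        have hle : ρ ⊓ N ≤ SRR N := by
          apply le_SRR inf_le_right
          · intro y hy x hx
            exact ⟨hρconj y (hNk hy) x hx.1, hNnorm.conj_mem x hx.2 y⟩
          · exact isSolvable_of_le inf_le_left (SRR_solvable k)
        rw [hT] at hle
        exact le_bot_iff.mp hle
      have hcomm : ∀ x ∈ ρ, ∀ y ∈ N, x * y = y * x := by
        intro x hx y hy
        have h1 : x * (y * x⁻¹ * y⁻¹) ∈ ρ := ρ.mul_mem hx (hρconj y (hNk hy) x⁻¹ (ρ.inv_mem hx))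
        have h2 : (x * y * x⁻¹) * y⁻¹ ∈ N := N.mul_mem (hNnorm.conj_mem y hy x) (N.inv_mem hy)
        have h3 : x * y * x⁻¹ * y⁻¹ ∈ ρ ⊓ N := ⟨by rw [show x * y * x⁻¹ * y⁻¹ = x * (y * x⁻¹ * y⁻¹) by group]; exact h1, h2⟩
        rw [hρN, Subgroup.mem_bot] at h3
        calc x * y = (x * y * x⁻¹ * y⁻¹) * (y * x) := by group
          _ = y * x := by rw [h3, one_mul]
      set C := Subgroup.centralizer (N : Set ↥Q) with hC
      have hρC : ρ ≤ C := fun x hx => Subgroup.mem_centralizer_iff.mpr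
        (fun y hy => (hcomm x hx y hy).symm)
      have hCnorm : C.Normal := by
        constructor
        intro x hx g
        rw [Subgroup.mem_centralizer_iff]
        intro y hy
        have hz : g⁻¹ * y * g ∈ N := by
          have := hNnorm.conj_mem y hy g⁻¹
          simpa using this
        have hzx := Subgroup.mem_centralizer_iff.mp hx _ hz
        calc y * (g * x * g⁻¹) = g * ((g⁻¹ * y * g) * x) * g⁻¹ := by group
          _ = g * (x * (g⁻¹ * y * g)) * g⁻¹ := by rw [hzx]
          _ = (g * x * g⁻¹) * y := by group
      have hCN : C ⊓ N = ⊥ := by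
        rcases eq_or_ne (C ⊓ N) ⊥ with hb | hb
        · exact hb
        · exfalso
          have hnor : (C ⊓ N).Normal :=
            ⟨fun x hx g => ⟨hCnorm.conj_mem x hx.1 g, hNnorm.conj_mem x hx.2 g⟩⟩
          have heq := hNmin _ hnor hb inf_le_right
          have hNle : N ≤ C := by rw [← heq]; exact inf_le_left
          apply hNs
          apply isSolvable_of_comm
          intro x y
          apply Subtype.ext
          exact (Subgroup.mem_centralizer_iff.mp (hNle x.2) (y : ↥Q) y.2).symm
      set W := R ⊓ C with hW
      have hWnorm : W.Normal :=
        ⟨fun x hx g => ⟨hRnorm.conj_mem x hx.1 g, hCnorm.conj_mem x hx.2 g⟩⟩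
      have haW : a ≤ W := le_inf haR (hrho.trans hρC)
      have hWs : IsSolvable ↥W := by
        haveI : Group.IsSolvable (solvRad (↥Q ⧸ N)) := solvRad_solvable (↥Q ⧸ N)
        apply solvable_of_solvable_injective
          (f := (π.comp W.subtype).codRestrict (solvRad (↥Q ⧸ N))
            (fun x => Subgroup.mem_comap.mp x.2.1))
        intro x y hxy
        have h1 : π (x : ↥Q) = π (y : ↥Q) := congrArg Subtype.val hxy
        have h2 : π ((x : ↥Q) * ((y : ↥Q))⁻¹) = 1 := by
          rw [map_mul, map_inv, h1, mul_inv_cancel]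
        have h3 : (x : ↥Q) * ((y : ↥Q))⁻¹ ∈ N := (QuotientGroup.eq_one_iff _).mp h2
        have h4 : (x : ↥Q) * ((y : ↥Q))⁻¹ ∈ C := C.mul_mem x.2.2 (C.inv_mem y.2.2)
        have h5 : (x : ↥Q) * ((y : ↥Q))⁻¹ = 1 := by
          have hmem : (x : ↥Q) * ((y : ↥Q))⁻¹ ∈ C ⊓ N := ⟨h4, h3⟩
          rw [hCN, Subgroup.mem_bot] at hmem
          exact hmem
        apply Subtype.ext
        exact mul_inv_eq_one.mp h5
      exact haW.trans (le_solvRad hWnorm hWs)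

end Main

/-- A solvable K𝔉-subnormal subgroup lies in the solvable radical. -/
theorem stmt13 (F : ∀ (G : Type u) [Group G], Prop) (hF : IsFormation F)
    (hsc : IsSubgroupClosed F) (hsolv : ∀ (G : Type u) [Group G], F G → IsSolvable G)
    {G : Type u} [Group G] [Finite G] {A : Subgroup G} (hA : IsSolvable A)
    (h : KSubnormal F A ⊤) : A ≤ solvRad G := by
  have h1 := main_thm hF hsolv (Nat.card ↥(⊤ : Subgroup G)) G A ⊤ h le_rfl hA
  exact h1.trans (SRR_top_le_solvRad G)
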